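/- Every RTM with stay transitions can be simulated by an ordinary RTM up to divergence-preserving branching bisimilarity: for every RTM with transitions allowing the head to stay (label S in addition to L, R), there is an RTM using only L and R moves whose associated transition system is divergence-preserving branching bisimilar to that of the original machine. -/

import Mathlib

/-- A labelled transition system over actions `A` together with the silent action `τ`
(represented by `none`). -/
structure LTS (A : Type) where
  S : Type
  tr : S → Option A → S → Prop
  init : S

namespace LTS

variable {A : Type}

/-- Reflexive-transitive closure of τ-steps, `s ⇒ t`. -/
def Star (T : LTS A) : T.S → T.S → Prop :=
  Relation.ReflTransGen (fun s t => T.tr s none t)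

/-- `s →(a) t`: either `s →a t`, or `a = τ` and `s = t`. -/
def OptStep (T : LTS A) (s : T.S) (a : Option A) (t : T.S) : Prop :=
  T.tr s a t ∨ (a = none ∧ s = t)

/-- `R` is a branching bisimulation from `T₁` to `T₂`. -/
def IsBB (T₁ T₂ : LTS A) (R : T₁.S → T₂.S → Prop) : Prop :=
  (∀ s₁ s₂, R s₁ s₂ → ∀ a s₁', T₁.tr s₁ a s₁' →
    ∃ s₂'' s₂', T₂.Star s₂ s₂'' ∧ T₂.OptStep s₂'' a s₂' ∧ R s₁ s₂'' ∧ R s₁' s₂') ∧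
  (∀ s₁ s₂, R s₁ s₂ → ∀ a s₂', T₂.tr s₂ a s₂' →
    ∃ s₁'' s₁', T₁.Star s₁ s₁'' ∧ T₁.OptStep s₁'' a s₁' ∧ R s₁'' s₂ ∧ R s₁' s₂')

/-- `T₁` and `T₂` are branching bisimilar. -/
def BBisim (T₁ T₂ : LTS A) : Prop :=
  ∃ R, IsBB T₁ T₂ R ∧ R T₁.init T₂.init

end LTS

namespace LTS

variable {A : Type}

/-- `R` is a divergence-preserving branching bisimulation from `T₁` to `T₂`. -/
def IsDPBB (T₁ T₂ : LTS A) (R : T₁.S → T₂.S → Prop) : Prop :=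
  IsBB T₁ T₂ R ∧
  (∀ s₁ s₂, R s₁ s₂ → ∀ f : ℕ → T₁.S, f 0 = s₁ →
    (∀ i, T₁.tr (f i) none (f (i + 1))) → (∀ i, R (f i) s₂) →
    ∃ s₂', Relation.TransGen (fun a b => T₂.tr a none b) s₂ s₂' ∧ ∃ i, R (f i) s₂') ∧
  (∀ s₁ s₂, R s₁ s₂ → ∀ f : ℕ → T₂.S, f 0 = s₂ →
    (∀ i, T₂.tr (f i) none (f (i + 1))) → (∀ i, R s₁ (f i)) →
    ∃ s₁', Relation.TransGen (fun a b => T₁.tr a none b) s₁ s₁' ∧ ∃ i, R s₁' (f i))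

/-- `T₁` and `T₂` are divergence-preserving branching bisimilar. -/
def BBisimD (T₁ T₂ : LTS A) : Prop :=
  ∃ R, IsDPBB T₁ T₂ R ∧ R T₁.init T₂.init

end LTS

/-- Tape head movements. -/
inductive Move where
  | L : Move
  | R : Move

/-- A reactive Turing machine over actions `A` (with τ as `none`) and tape alphabet `D`:
a finite set of states, a transition relation `tr s d a e m t`, and an initial state. -/
structure RTM (A D : Type) where
  Q : Type
  fin : Finite Q
  tr : Q → D → Option A → D → Move → Q → Prop
  init : Q

/-- Moving the head left after writing `e` (left part of the tape stored reversed). -/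
def moveL {D : Type} (blank : D) (l : List D) (e : D) (r : List D) :
    List D × D × List D :=
  match l with
  | [] => ([], blank, e :: r)
  | h :: t => (t, h, e :: r)

/-- Moving the head right after writing `e`. -/
def moveR {D : Type} (blank : D) (l : List D) (e : D) (r : List D) :
    List D × D × List D :=
  match r with
  | [] => (e :: l, blank, [])
  | h :: t => (e :: l, h, t)

/-- The transition system associated with an RTM: states are configurations
(control state together with a tape instance), the initial state is the initial
control state with the everywhere-blank tape. -/
def RTM.lts {A D : Type} (blank : D) (M : RTM A D) : LTS A where
  S := M.Q × List D × D × List D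
  init := (M.init, [], blank, [])
  tr := fun c a c' =>
    ∃ e, (M.tr c.1 c.2.2.1 a e Move.L c'.1 ∧ c'.2 = moveL blank c.2.1 e c.2.2.2) ∨
         (M.tr c.1 c.2.2.1 a e Move.R c'.1 ∧ c'.2 = moveR blank c.2.1 e c.2.2.2)

/-- Tape head movements including the stay move. -/
inductive MoveSt where
  | L : MoveSt
  | R : MoveSt
  | St : MoveSt

/-- A reactive Turing machine with stay transitions. -/
structure RTMst (A D : Type) where
  Q : Type
  fin : Finite Q
  tr : Q → D → Option A → D → MoveSt → Q → Prop
  init : Q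

/-- The transition system associated with an RTM with stay transitions. -/
def RTMst.lts {A D : Type} (blank : D) (M : RTMst A D) : LTS A where
  S := M.Q × List D × D × List D
  init := (M.init, [], blank, [])
  tr := fun c a c' =>
    ∃ e, (M.tr c.1 c.2.2.1 a e MoveSt.L c'.1 ∧ c'.2 = moveL blank c.2.1 e c.2.2.2) ∨
         (M.tr c.1 c.2.2.1 a e MoveSt.R c'.1 ∧ c'.2 = moveR blank c.2.1 e c.2.2.2) ∨
         (M.tr c.1 c.2.2.1 a e MoveSt.St c'.1 ∧ c'.2 = (c.2.1, e, c.2.2.2))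

/-!
A stay transition `s →a[d/e]St t` is simulated by a left move `s →a[d/e]L sₜ` into a fresh
copy `sₜ` of `t`, followed by a silent right move out of `sₜ` that rewrites the symbol it reads.
The pair of moves restores the tape up to trailing blanks, which never influence the
behaviour of a machine. Relating a configuration in a fresh state to the configuration it
reaches by its pending right move, every other step of the two machines is matched one-for-one,
and each fresh state has a single outgoing step, a silent one; this gives a
divergence-preserving branching bisimulation.
-/

namespace LTS

variable {A : Type}

theorem IsDPBB.of_lockstep {T₁ T₂ : LTS A} (R : T₁.S → T₂.S → Prop) (P : T₁.S → Prop)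
    (step_fwd : ∀ s₁ s₂, P s₁ → R s₁ s₂ → ∀ a s₁', T₁.tr s₁ a s₁' →
      ∃ s₂', T₂.tr s₂ a s₂' ∧ R s₁' s₂')
    (step_bwd : ∀ s₁ s₂, P s₁ → R s₁ s₂ → ∀ a s₂', T₂.tr s₂ a s₂' →
      ∃ s₁', T₁.tr s₁ a s₁' ∧ R s₁' s₂')
    (exists_exit : ∀ s₁ s₂, ¬ P s₁ → R s₁ s₂ → ∃ s₁', T₁.tr s₁ none s₁' ∧ P s₁' ∧ R s₁' s₂)
    (tr_exit : ∀ s₁ s₂, ¬ P s₁ → R s₁ s₂ → ∀ a s₁', T₁.tr s₁ a s₁' →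
      a = none ∧ P s₁' ∧ R s₁' s₂) :
    IsDPBB T₁ T₂ R := by
  refine ⟨⟨?_, ?_⟩, ?_, ?_⟩
  · intro s₁ s₂ hR a s₁' h
    by_cases hP : P s₁
    · obtain ⟨s₂', h₂, hR'⟩ := step_fwd s₁ s₂ hP hR a s₁' h
      exact ⟨s₂, s₂', .refl, .inl h₂, hR, hR'⟩
    · obtain ⟨rfl, -, hR'⟩ := tr_exit s₁ s₂ hP hR a s₁' h
      exact ⟨s₂, s₂, .refl, .inr ⟨rfl, rfl⟩, hR, hR'⟩
  · intro s₁ s₂ hR a s₂' h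
    by_cases hP : P s₁
    · obtain ⟨s₁', h₁, hR'⟩ := step_bwd s₁ s₂ hP hR a s₂' h
      exact ⟨s₁, s₁', .refl, .inl h₁, hR, hR'⟩
    · obtain ⟨s₁'', hexit, hP'', hR''⟩ := exists_exit s₁ s₂ hP hR
      obtain ⟨s₁', h₁, hR'⟩ := step_bwd s₁'' s₂ hP'' hR'' a s₂' h
      exact ⟨s₁'', s₁', .single hexit, .inl h₁, hR'', hR'⟩
  · intro s₁ s₂ _ f _ hf hfR
    have diverge_from : ∀ i, P (f i) →
        ∃ s₂', Relation.TransGen (fun a b => T₂.tr a none b) s₂ s₂' ∧ ∃ i, R (f i) s₂' := by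
      intro i hP
      obtain ⟨s₂', h₂, hR'⟩ := step_fwd (f i) s₂ hP (hfR i) none (f (i + 1)) (hf i)
      exact ⟨s₂', .single h₂, i + 1, hR'⟩
    by_cases hP : P (f 0)
    · exact diverge_from 0 hP
    · exact diverge_from 1 (tr_exit (f 0) s₂ hP (hfR 0) none (f 1) (hf 0)).2.1
  · intro s₁ s₂ hR f hf0 hf _
    subst hf0
    by_cases hP : P s₁
    · obtain ⟨s₁', h₁, hR'⟩ := step_bwd s₁ (f 0) hP hR none (f 1) (hf 0)
      exact ⟨s₁', .single h₁, 1, hR'⟩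
    · obtain ⟨s₁'', hexit, hP'', hR''⟩ := exists_exit s₁ (f 0) hP hR
      obtain ⟨s₁', h₁, hR'⟩ := step_bwd s₁'' (f 0) hP'' hR'' none (f 1) (hf 0)
      exact ⟨s₁', .tail (.single hexit) h₁, 1, hR'⟩

end LTS

section BlankEq

variable {D : Type} (blank : D)

def ListBlankEq (l l' : List D) : Prop := ∀ i, l.getD i blank = l'.getD i blank

def TapeBlankEq (t t' : List D × D × List D) : Prop :=
  ListBlankEq blank t.1 t'.1 ∧ t.2.1 = t'.2.1 ∧ ListBlankEq blank t.2.2 t'.2.2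

def ConfigBlankEq {Q : Type} (c c' : Q × List D × D × List D) : Prop :=
  c.1 = c'.1 ∧ TapeBlankEq blank c.2 c'.2

variable {blank}

theorem ListBlankEq.refl (l : List D) : ListBlankEq blank l l := fun _ => rfl

theorem ListBlankEq.symm {l l' : List D} (h : ListBlankEq blank l l') :
    ListBlankEq blank l' l := fun i => (h i).symm

theorem ListBlankEq.trans {l₁ l₂ l₃ : List D} (h : ListBlankEq blank l₁ l₂)
    (h' : ListBlankEq blank l₂ l₃) : ListBlankEq blank l₁ l₃ := fun i => (h i).trans (h' i)

theorem ListBlankEq.cons (e : D) {l l' : List D} (h : ListBlankEq blank l l') :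
    ListBlankEq blank (e :: l) (e :: l')
  | 0 => rfl
  | i + 1 => h i

theorem List.getD_tail (l : List D) (i : ℕ) : l.tail.getD i blank = l.getD (i + 1) blank := by
  cases l <;> simp

theorem ListBlankEq.tail {l l' : List D} (h : ListBlankEq blank l l') :
    ListBlankEq blank l.tail l'.tail := fun i => by
  rw [List.getD_tail, List.getD_tail]
  exact h (i + 1)

theorem ListBlankEq.getD_zero_cons_tail (l : List D) :
    ListBlankEq blank (l.getD 0 blank :: l.tail) l := by
  rintro (_ | i)
  · rfl
  · rw [List.getD_cons_succ, List.getD_tail]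

theorem TapeBlankEq.refl (t : List D × D × List D) : TapeBlankEq blank t t :=
  ⟨.refl _, rfl, .refl _⟩

theorem TapeBlankEq.symm {t t' : List D × D × List D} (h : TapeBlankEq blank t t') :
    TapeBlankEq blank t' t :=
  ⟨h.1.symm, h.2.1.symm, h.2.2.symm⟩

theorem TapeBlankEq.trans {t₁ t₂ t₃ : List D × D × List D} (h : TapeBlankEq blank t₁ t₂)
    (h' : TapeBlankEq blank t₂ t₃) : TapeBlankEq blank t₁ t₃ :=
  ⟨h.1.trans h'.1, h.2.1.trans h'.2.1, h.2.2.trans h'.2.2⟩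

theorem ConfigBlankEq.symm {Q : Type} {c c' : Q × List D × D × List D}
    (h : ConfigBlankEq blank c c') : ConfigBlankEq blank c' c :=
  ⟨h.1.symm, h.2.symm⟩

theorem ConfigBlankEq.trans {Q : Type} {c₁ c₂ c₃ : Q × List D × D × List D}
    (h : ConfigBlankEq blank c₁ c₂) (h' : ConfigBlankEq blank c₂ c₃) :
    ConfigBlankEq blank c₁ c₃ :=
  ⟨h.1.trans h'.1, h.2.trans h'.2⟩

variable (blank)

theorem moveL_eq (l : List D) (e : D) (r : List D) :
    moveL blank l e r = (l.tail, l.getD 0 blank, e :: r) := by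
  cases l <;> rfl

theorem moveR_eq (l : List D) (e : D) (r : List D) :
    moveR blank l e r = (e :: l, r.getD 0 blank, r.tail) := by
  cases r <;> rfl

variable {blank}

theorem moveL_congr {l l' r r' : List D} (e : D) (hl : ListBlankEq blank l l')
    (hr : ListBlankEq blank r r') :
    TapeBlankEq blank (moveL blank l e r) (moveL blank l' e r') := by
  rw [moveL_eq, moveL_eq]
  exact ⟨hl.tail, hl 0, hr.cons e⟩

theorem moveR_congr {l l' r r' : List D} (e : D) (hl : ListBlankEq blank l l')
    (hr : ListBlankEq blank r r') :
    TapeBlankEq blank (moveR blank l e r) (moveR blank l' e r') := by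
  rw [moveR_eq, moveR_eq]
  exact ⟨hl.cons e, hr 0, hr.tail⟩

theorem tapeBlankEq_moveR_moveL (l : List D) (e : D) (r : List D) :
    TapeBlankEq blank (moveR blank (moveL blank l e r).1 (moveL blank l e r).2.1
      (moveL blank l e r).2.2) (l, e, r) := by
  rw [moveL_eq, moveR_eq]
  exact ⟨.getD_zero_cons_tail l, rfl, .refl r⟩

end BlankEq

namespace RTMst

variable {A D : Type} (blank : D) (M : RTMst A D)

theorem lts_tr_congr {q : M.Q} {t₁ t₂ : List D × D × List D} (ht : TapeBlankEq blank t₁ t₂)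
    {a : Option A} {c₁ : M.Q × List D × D × List D} (h : (M.lts blank).tr (q, t₁) a c₁) :
    ∃ c₂, (M.lts blank).tr (q, t₂) a c₂ ∧ ConfigBlankEq blank c₁ c₂ := by
  obtain ⟨hl, hd, hr⟩ := ht
  obtain ⟨e, ⟨htr, hmv⟩ | ⟨htr, hmv⟩ | ⟨htr, hmv⟩⟩ := h
  · exact ⟨(c₁.1, moveL blank t₂.1 e t₂.2.2), ⟨e, .inl ⟨hd ▸ htr, rfl⟩⟩, rfl,
      hmv ▸ moveL_congr e hl hr⟩
  · exact ⟨(c₁.1, moveR blank t₂.1 e t₂.2.2), ⟨e, .inr (.inl ⟨hd ▸ htr, rfl⟩)⟩, rfl,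
      hmv ▸ moveR_congr e hl hr⟩
  · exact ⟨(c₁.1, t₂.1, e, t₂.2.2), ⟨e, .inr (.inr ⟨hd ▸ htr, rfl⟩)⟩, rfl,
      hmv ▸ ⟨hl, rfl, hr⟩⟩

/-- The states `inr t` are the fresh copies `sₜ`. -/
def toRTM : RTM A D where
  Q := M.Q ⊕ M.Q
  fin := haveI := M.fin; inferInstance
  init := Sum.inl M.init
  tr := fun q d a e m q' =>
    match q, q' with
    | Sum.inl s, Sum.inl t =>
        (M.tr s d a e MoveSt.L t ∧ m = Move.L) ∨ (M.tr s d a e MoveSt.R t ∧ m = Move.R)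
    | Sum.inl s, Sum.inr t => M.tr s d a e MoveSt.St t ∧ m = Move.L
    | Sum.inr s, Sum.inl t => t = s ∧ a = none ∧ e = d ∧ m = Move.R
    | Sum.inr _, Sum.inr _ => False

def resolve : (M.Q ⊕ M.Q) × List D × D × List D → M.Q × List D × D × List D
  | (Sum.inl q, t) => (q, t)
  | (Sum.inr q, t) => (q, moveR blank t.1 t.2.1 t.2.2)

def SimRel (c : (M.Q ⊕ M.Q) × List D × D × List D) (c' : M.Q × List D × D × List D) :
    Prop :=
  ConfigBlankEq blank (M.resolve blank c) c'

theorem toRTM_tr_inl {q : M.Q} {t : List D × D × List D} {a : Option A}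
    {c : (M.Q ⊕ M.Q) × List D × D × List D} (h : (M.toRTM.lts blank).tr (Sum.inl q, t) a c) :
    ∃ c₀, (M.lts blank).tr (q, t) a c₀ ∧ ConfigBlankEq blank (M.resolve blank c) c₀ := by
  obtain ⟨p | p, t'⟩ := c <;>
    obtain ⟨e, ⟨htr, rfl : t' = _⟩ | ⟨htr, rfl : t' = _⟩⟩ := h <;>
    simp only [toRTM, reduceCtorEq, and_true, and_false, or_false, false_or] at htr
  · exact ⟨_, ⟨e, .inl ⟨htr, rfl⟩⟩, rfl, .refl _⟩
  · exact ⟨_, ⟨e, .inr (.inl ⟨htr, rfl⟩)⟩, rfl, .refl _⟩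
  · exact ⟨(p, t.1, e, t.2.2), ⟨e, .inr (.inr ⟨htr, rfl⟩)⟩, rfl, tapeBlankEq_moveR_moveL _ _ _⟩

theorem toRTM_tr_of_lts_tr {q : M.Q} {t : List D × D × List D} {a : Option A}
    {c₀ : M.Q × List D × D × List D} (h : (M.lts blank).tr (q, t) a c₀) :
    ∃ c, (M.toRTM.lts blank).tr (Sum.inl q, t) a c ∧
      ConfigBlankEq blank (M.resolve blank c) c₀ := by
  obtain ⟨e, ⟨htr, hmv⟩ | ⟨htr, hmv⟩ | ⟨htr, hmv⟩⟩ := h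
  · exact ⟨(Sum.inl c₀.1, _), ⟨e, .inl ⟨.inl ⟨htr, rfl⟩, rfl⟩⟩, rfl, hmv ▸ .refl _⟩
  · exact ⟨(Sum.inl c₀.1, _), ⟨e, .inr ⟨.inr ⟨htr, rfl⟩, rfl⟩⟩, rfl, hmv ▸ .refl _⟩
  · exact ⟨(Sum.inr c₀.1, _), ⟨e, .inl ⟨⟨htr, rfl⟩, rfl⟩⟩, rfl, hmv ▸ tapeBlankEq_moveR_moveL _ _ _⟩

theorem toRTM_tr_inr_iff {q : M.Q} {t : List D × D × List D} {a : Option A}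
    {c : (M.Q ⊕ M.Q) × List D × D × List D} :
    (M.toRTM.lts blank).tr (Sum.inr q, t) a c ↔
      a = none ∧ c = (Sum.inl q, moveR blank t.1 t.2.1 t.2.2) := by
  constructor
  · obtain ⟨p | p, t'⟩ := c <;>
      rintro ⟨e, ⟨htr, rfl : t' = _⟩ | ⟨htr, rfl : t' = _⟩⟩ <;>
      simp only [toRTM, reduceCtorEq, and_true, and_false] at htr
    obtain ⟨rfl, rfl, rfl⟩ := htr
    exact ⟨rfl, rfl⟩
  · rintro ⟨rfl, rfl⟩
    exact ⟨t.2.1, .inr ⟨⟨rfl, rfl, rfl, rfl⟩, rfl⟩⟩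

theorem isDPBB_simRel : LTS.IsDPBB (M.toRTM.lts blank) (M.lts blank) (M.SimRel blank) := by
  refine .of_lockstep _ (fun c => c.1.isLeft) ?_ ?_ ?_ ?_
  · rintro ⟨q | q, t⟩ ⟨q', t'⟩ hP ⟨rfl : q = q', ht⟩ a c h
    · obtain ⟨c₀, h₀, hc₀⟩ := M.toRTM_tr_inl blank h
      obtain ⟨c', h', hc'⟩ := M.lts_tr_congr blank ht h₀
      exact ⟨c', h', hc₀.trans hc'⟩
    · cases hP
  · rintro ⟨q | q, t⟩ ⟨q', t'⟩ hP ⟨rfl : q = q', ht⟩ a c' h'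
    · obtain ⟨c₀, h₀, hc₀⟩ := M.lts_tr_congr blank ht.symm h'
      obtain ⟨c, h, hc⟩ := M.toRTM_tr_of_lts_tr blank h₀
      exact ⟨c, h, hc.trans hc₀.symm⟩
    · cases hP
  · rintro ⟨q | q, t⟩ c' hP hR
    · cases hP rfl
    · exact ⟨_, (M.toRTM_tr_inr_iff blank).2 ⟨rfl, rfl⟩, rfl, hR⟩
  · rintro ⟨q | q, t⟩ c' hP hR a c h
    · cases hP rfl
    · obtain ⟨rfl, rfl⟩ := (M.toRTM_tr_inr_iff blank).1 h
      exact ⟨rfl, rfl, hR⟩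

end RTMst

theorem stmt_17_general {A D : Type} (blank : D) (M : RTMst A D) :
    ∃ M' : RTM A D, LTS.BBisimD (M'.lts blank) (M.lts blank) :=
  ⟨M.toRTM, M.SimRel blank, M.isDPBB_simRel blank, rfl, .refl _⟩

/-- Every RTM with stay transitions can be simulated, up to divergence-preserving
branching bisimilarity, by an ordinary RTM using only left and right moves. -/
theorem stmt_17 {A D : Type} [Finite A] [Finite D] (blank : D) (M : RTMst A D) :
    ∃ M' : RTM A D, LTS.BBisimD (M'.lts blank) (M.lts blank) :=
  stmt_17_general blank M
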